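/- arXiv:1809.08368 — 9 statements merged into one kernel-verified Lean document; each statement's English description precedes it below -/
import Mathlib

section
/- Let G be a finite simple graph on vertex set {v_1, …, v_n}, and let k be a natural number. Let Q be the simple graph on the vertex set {v_1, …, v_n} ∪ {w} ∪ {u_1, …, u_n} (with w and all u_i new vertices) whose edge set consists exactly of: the edges {w, v_i} for every i = 1, …, n; the edges {u_i, v_i} for every i = 1, …, n; and the edges {u_i, u_{i+1}} for i = 1, …, n−1. Then G has a vertex cover of size at most k if and only if there exists a set D of at most k edges of Q such that in the graph obtained from Q by deleting the edges in D, for every pair (v_i, v_j) that forms an edge of G, the vertices v_i and v_j have no common neighbor. -/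
private lemma common_nbr_aux {n : ℕ} {i : Fin n} {z : Fin n ⊕ Unit ⊕ Fin n}
    (h : (SimpleGraph.fromRel (fun a b : Fin n ⊕ Unit ⊕ Fin n =>
      (∃ i : Fin n, a = Sum.inr (Sum.inl ()) ∧ b = Sum.inl i) ∨
      (∃ i : Fin n, a = Sum.inr (Sum.inr i) ∧ b = Sum.inl i) ∨
      (∃ i j : Fin n, (j : ℕ) = (i : ℕ) + 1 ∧
        a = Sum.inr (Sum.inr i) ∧ b = Sum.inr (Sum.inr j)))).Adj (Sum.inl i) z) :
    z = Sum.inr (Sum.inl ()) ∨ z = Sum.inr (Sum.inr i) := by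
  rw [SimpleGraph.fromRel_adj] at h
  obtain ⟨-, h | h⟩ := h <;>
    rcases h with ⟨m, h1, h2⟩ | ⟨m, h1, h2⟩ | ⟨m, m', hmm, h1, h2⟩ <;>
      simp_all

/-- The vertex-cover reduction for attacking the Common Neighbors metric:
`G` has a vertex cover of size at most `k` iff one can delete at most `k` edges of the
constructed graph `Q` so that every target pair `(v i, v j)` (an edge of `G`) loses all
common neighbors. Vertices of `Q`: `Sum.inl i` is `v i`, `Sum.inr (Sum.inl ())` is `w`,
and `Sum.inr (Sum.inr i)` is `u i`. -/
theorem stmt_0 (n k : ℕ) (G : SimpleGraph (Fin n))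
    (Q : SimpleGraph (Fin n ⊕ Unit ⊕ Fin n))
    (hQ : Q = SimpleGraph.fromRel (fun a b =>
      (∃ i : Fin n, a = Sum.inr (Sum.inl ()) ∧ b = Sum.inl i) ∨
      (∃ i : Fin n, a = Sum.inr (Sum.inr i) ∧ b = Sum.inl i) ∨
      (∃ i j : Fin n, (j : ℕ) = (i : ℕ) + 1 ∧
        a = Sum.inr (Sum.inr i) ∧ b = Sum.inr (Sum.inr j)))) :
    (∃ C : Finset (Fin n), C.card ≤ k ∧
        ∀ a b : Fin n, G.Adj a b → a ∈ C ∨ b ∈ C) ↔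
    (∃ D : Finset (Sym2 (Fin n ⊕ Unit ⊕ Fin n)), D.card ≤ k ∧ ↑D ⊆ Q.edgeSet ∧
        ∀ i j : Fin n, G.Adj i j →
          ¬ ∃ z : Fin n ⊕ Unit ⊕ Fin n,
              (Q.deleteEdges ↑D).Adj (Sum.inl i) z ∧
              (Q.deleteEdges ↑D).Adj (Sum.inl j) z) := by
  subst hQ
  have hQadj : ∀ i : Fin n,
      (SimpleGraph.fromRel (fun a b : Fin n ⊕ Unit ⊕ Fin n =>
        (∃ i : Fin n, a = Sum.inr (Sum.inl ()) ∧ b = Sum.inl i) ∨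
        (∃ i : Fin n, a = Sum.inr (Sum.inr i) ∧ b = Sum.inl i) ∨
        (∃ i j : Fin n, (j : ℕ) = (i : ℕ) + 1 ∧
          a = Sum.inr (Sum.inr i) ∧ b = Sum.inr (Sum.inr j)))).Adj
        (Sum.inl i) (Sum.inr (Sum.inl ())) := by
    intro i
    rw [SimpleGraph.fromRel_adj]
    exact ⟨by simp, Or.inr (Or.inl ⟨i, rfl, rfl⟩)⟩
  constructor
  · rintro ⟨C, hCk, hCcov⟩
    refine ⟨C.image (fun i => s(Sum.inr (Sum.inl ()), Sum.inl i)), ?_, ?_, ?_⟩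
    · exact Finset.card_image_le.trans hCk
    · intro e he
      simp only [Finset.coe_image, Set.mem_image, Finset.mem_coe] at he
      obtain ⟨i, hi, rfl⟩ := he
      rw [SimpleGraph.mem_edgeSet]
      exact ((hQadj i).symm)
    · rintro i j hij ⟨z, hz1', hz2'⟩
      rw [SimpleGraph.deleteEdges_adj] at hz1' hz2'
      obtain ⟨hz1, hz1d⟩ := hz1'
      obtain ⟨hz2, hz2d⟩ := hz2'
      have hne : i ≠ j := G.ne_of_adj hij
      rcases common_nbr_aux hz1 with rfl | rfl
      · rcases hCcov i j hij with hi | hj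
        · exact hz1d (Finset.mem_coe.mpr (Finset.mem_image.mpr ⟨i, hi, Sym2.eq_swap⟩))
        · exact hz2d (Finset.mem_coe.mpr (Finset.mem_image.mpr ⟨j, hj, Sym2.eq_swap⟩))
      · rcases common_nbr_aux hz2 with h | h <;> simp_all
  · rintro ⟨D, hDk, hDsub, hD⟩
    refine ⟨Finset.univ.filter
      (fun i => s(Sum.inl i, (Sum.inr (Sum.inl ()) : Fin n ⊕ Unit ⊕ Fin n)) ∈ D),
      ?_, ?_⟩
    · refine le_trans (Finset.card_le_card_of_injOn
        (fun i => s(Sum.inl i, (Sum.inr (Sum.inl ()) : Fin n ⊕ Unit ⊕ Fin n)))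
        (fun i hi => by simpa using (Finset.mem_filter.mp hi).2) ?_) hDk
      intro a _ b _ hab
      simp [Sym2.eq, Sym2.rel_iff'] at hab
      exact hab
    · intro a b hab
      by_contra hcon
      push_neg at hcon
      simp only [Finset.mem_filter, Finset.mem_univ, true_and] at hcon
      refine hD a b hab ⟨Sum.inr (Sum.inl ()), ?_, ?_⟩ <;>
        rw [SimpleGraph.deleteEdges_adj]
      · exact ⟨hQadj a, by simpa using hcon.1⟩
      · exact ⟨hQadj b, by simpa using hcon.2⟩
end

section
/- Let I and J be finite index sets, X⁰ ∈ {0,1}^{I×J} a decision matrix, H a finite set of pairs of distinct elements of J (the target links), and for each (p,q) ∈ H let w_{pq} ≥ 0 and L_{pq} > 0 be constants. For a set S of positions (i,j) ∈ I×J with X⁰_{ij} = 1, let X_S denote the matrix obtained from X⁰ by setting the entries in S to 0, and define f_{tu}(S) = Σ_{(p,q)∈H} (w_{pq}/L_{pq}) · Σ_{i∈I} (X_S)_{ip}(X_S)_{iq} and F(S) = f_{tu}(∅) − f_{tu}(S). Then F is monotone nondecreasing: for all S ⊆ S' (both sets of positions at which X⁰ equals 1), F(S) ≤ F(S'). -/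
/-- Monotonicity of `F(S) = f_tu(∅) − f_tu(S)`, where `f_tu` is the
submodular-relaxation upper bound on the total weighted similarity of the target links. -/
theorem stmt_1 {I J : Type*} [Fintype I] [DecidableEq I] [DecidableEq J]
    (X0 : I → J → ℝ) (hX0 : ∀ i j, X0 i j = 0 ∨ X0 i j = 1)
    (H : Finset (J × J)) (hH : ∀ pq ∈ H, pq.1 ≠ pq.2)
    (w L : J → J → ℝ)
    (hw : ∀ pq ∈ H, 0 ≤ w pq.1 pq.2) (hL : ∀ pq ∈ H, 0 < L pq.1 pq.2)
    (X : Finset (I × J) → I → J → ℝ)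
    (hX : ∀ S i j, X S i j = if (i, j) ∈ S then 0 else X0 i j)
    (ftu : Finset (I × J) → ℝ)
    (hftu : ∀ S, ftu S =
      ∑ pq ∈ H, (w pq.1 pq.2 / L pq.1 pq.2) * ∑ i : I, X S i pq.1 * X S i pq.2)
    (F : Finset (I × J) → ℝ) (hF : ∀ S, F S = ftu ∅ - ftu S)
    (S S' : Finset (I × J))
    (hS : ∀ e ∈ S, X0 e.1 e.2 = 1) (hS' : ∀ e ∈ S', X0 e.1 e.2 = 1)
    (hSS' : S ⊆ S') :
    F S ≤ F S' := by
  have hnn : ∀ T i j, 0 ≤ X T i j := by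
    intro T i j
    rw [hX]
    split
    · exact le_refl 0
    · rcases hX0 i j with h | h <;> rw [h] <;> norm_num
  have hmono : ∀ i j, X S' i j ≤ X S i j := by
    intro i j
    rw [hX, hX]
    by_cases h' : (i, j) ∈ S'
    · simp only [h', if_true]
      split
      · exact le_refl 0
      · rcases hX0 i j with h | h <;> rw [h] <;> norm_num
    · have h : (i, j) ∉ S := fun hm => h' (hSS' hm)
      simp [h, h']
  rw [hF, hF]
  have : ftu S' ≤ ftu S := by
    rw [hftu, hftu]
    refine Finset.sum_le_sum fun pq hpq => ?_
    refine mul_le_mul_of_nonneg_left ?_ (div_nonneg (hw pq hpq) (hL pq hpq).le)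
    refine Finset.sum_le_sum fun i _ => ?_
    exact mul_le_mul (hmono i pq.1) (hmono i pq.2) (hnn S' i pq.2) (hnn S i pq.1)
  linarith
end

section
/- Let I and J be finite index sets, X⁰ ∈ {0,1}^{I×J} a decision matrix, H a finite set of pairs of distinct elements of J (the target links), and for each (p,q) ∈ H let w_{pq} ≥ 0 and L_{pq} > 0 be constants. For a set S of positions (i,j) ∈ I×J with X⁰_{ij} = 1, let X_S denote the matrix obtained from X⁰ by setting the entries in S to 0, and define f_{tu}(S) = Σ_{(p,q)∈H} (w_{pq}/L_{pq}) · Σ_{i∈I} (X_S)_{ip}(X_S)_{iq} and F(S) = f_{tu}(∅) − f_{tu}(S). Then F is submodular: for all sets S ⊆ S' of positions at which X⁰ equals 1, and every position e with X⁰_e = 1 and e ∉ S', one has F(S ∪ {e}) − F(S) ≥ F(S' ∪ {e}) − F(S'). -/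
/-- Submodularity of `F(S) = f_tu(∅) − f_tu(S)`, where `f_tu` is the
submodular-relaxation upper bound on the total weighted similarity of the target links. -/
theorem stmt_2 {I J : Type*} [Fintype I] [DecidableEq I] [DecidableEq J]
    (X0 : I → J → ℝ) (hX0 : ∀ i j, X0 i j = 0 ∨ X0 i j = 1)
    (H : Finset (J × J)) (hH : ∀ pq ∈ H, pq.1 ≠ pq.2)
    (w L : J → J → ℝ)
    (hw : ∀ pq ∈ H, 0 ≤ w pq.1 pq.2) (hL : ∀ pq ∈ H, 0 < L pq.1 pq.2)
    (X : Finset (I × J) → I → J → ℝ)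
    (hX : ∀ S i j, X S i j = if (i, j) ∈ S then 0 else X0 i j)
    (ftu : Finset (I × J) → ℝ)
    (hftu : ∀ S, ftu S =
      ∑ pq ∈ H, (w pq.1 pq.2 / L pq.1 pq.2) * ∑ i : I, X S i pq.1 * X S i pq.2)
    (F : Finset (I × J) → ℝ) (hF : ∀ S, F S = ftu ∅ - ftu S)
    (S S' : Finset (I × J))
    (hS : ∀ e ∈ S, X0 e.1 e.2 = 1) (hS' : ∀ e ∈ S', X0 e.1 e.2 = 1)
    (hSS' : S ⊆ S')
    (e : I × J) (he : X0 e.1 e.2 = 1) (heS' : e ∉ S') :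
    F (insert e S') - F S' ≤ F (insert e S) - F S := by
  have heS : e ∉ S := fun h => heS' (hSS' h)
  have hX0nn : ∀ i j, (0:ℝ) ≤ X0 i j := by
    intro i j; rcases hX0 i j with h | h <;> simp [h]
  have hXmono : ∀ i j, X S' i j ≤ X S i j := by
    intro i j; rw [hX, hX]
    by_cases h : (i, j) ∈ S
    · simp [h, hSS' h]
    · simp only [h, if_neg]
      split
      · exact hX0nn i j
      · exact le_refl _
  have hXe : ∀ (T : Finset (I × J)), e ∉ T → X T e.1 e.2 = 1 := by
    intro T hT; rw [hX]; simp [hT, he]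
  have hXinse : ∀ (T : Finset (I × J)), X (insert e T) e.1 e.2 = 0 := by
    intro T; rw [hX]; simp
  have hXinsne : ∀ (T : Finset (I × J)) i j, (i, j) ≠ e →
      X (insert e T) i j = X T i j := by
    intro T i j hij; rw [hX, hX]
    simp [Finset.mem_insert, hij]
  have main : ∀ (p q : J), p ≠ q → ∀ i : I,
      X S' i p * X S' i q - X (insert e S') i p * X (insert e S') i q ≤
      X S i p * X S i q - X (insert e S) i p * X (insert e S) i q := by
    intro p q hpq i
    by_cases hp : (i, p) = e
    · subst hp
      have hq : (i, q) ≠ (i, p) := fun h =>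
        hpq (((Prod.mk.injEq i q i p).mp h).2.symm)
      have h1 : X S i p = 1 := hXe S heS
      have h1' : X S' i p = 1 := hXe S' heS'
      have h2 : X (insert (i, p) S) i p = 0 := hXinse S
      have h2' : X (insert (i, p) S') i p = 0 := hXinse S'
      rw [h1, h1', h2, h2', hXinsne S i q hq, hXinsne S' i q hq]
      simpa using hXmono i q
    · by_cases hq : (i, q) = e
      · subst hq
        have h1 : X S i q = 1 := hXe S heS
        have h1' : X S' i q = 1 := hXe S' heS'
        have h2 : X (insert (i, q) S) i q = 0 := hXinse S
        have h2' : X (insert (i, q) S') i q = 0 := hXinse S'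
        rw [h1, h1', h2, h2', hXinsne S i p hp, hXinsne S' i p hp]
        simpa using hXmono i p
      · rw [hXinsne S i p hp, hXinsne S' i p hp, hXinsne S i q hq, hXinsne S' i q hq]
        simp
    -- end main
  have key : ftu S' - ftu (insert e S') ≤ ftu S - ftu (insert e S) := by
    rw [hftu S, hftu S', hftu (insert e S), hftu (insert e S'),
      ← Finset.sum_sub_distrib, ← Finset.sum_sub_distrib]
    apply Finset.sum_le_sum
    intro pq hpq
    rw [← mul_sub, ← mul_sub, ← Finset.sum_sub_distrib, ← Finset.sum_sub_distrib]
    apply mul_le_mul_of_nonneg_left _ (div_nonneg (hw pq hpq) (hL pq hpq).le)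
    exact Finset.sum_le_sum fun i _ => main pq.1 pq.2 (hH pq hpq) i
  rw [hF, hF, hF, hF]
  linarith
end

section
/- Let I and J be finite index sets and H a finite set of pairs of distinct elements of J, with constants w_{pq} ≥ 0 and L_{pq} > 0 for each (p,q) ∈ H. For each (p,q) ∈ H, let g_{pq} be a real-valued function on matrices in {0,1}^{I×J} such that: (i) g_{pq} is monotone, i.e. g_{pq}(Y) ≤ g_{pq}(X) whenever Y ≤ X entrywise, and (ii) g_{pq}(Z) ≥ L_{pq} for every Z ∈ {0,1}^{I×J}. Define the gap function α(Z) = Σ_{(p,q)∈H} w_{pq} · ⟨C_p(Z), C_q(Z)⟩ · (1/L_{pq} − 1/g_{pq}(Z)). Then α is monotone nondecreasing with respect to the entrywise order: if X, Y ∈ {0,1}^{I×J} satisfy Y ≤ X entrywise, then α(Y) ≤ α(X). -/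
/-- (Theorem 3 of the paper.) The gap
`α(Z) = Σ_{(p,q)∈H} w_{pq} ⟨C_p(Z),C_q(Z)⟩ (1/L_{pq} − 1/g_{pq}(Z))`
between the total WCN similarity and its upper-bound relaxation is monotone
nondecreasing in the decision matrix `Z` (entrywise order on `{0,1}`-matrices). -/
theorem stmt_3 {I J : Type*} [Fintype I] [DecidableEq I] [DecidableEq J]
    (H : Finset (J × J)) (hH : ∀ pq ∈ H, pq.1 ≠ pq.2)
    (w L : J → J → ℝ)
    (hw : ∀ pq ∈ H, 0 ≤ w pq.1 pq.2) (hL : ∀ pq ∈ H, 0 < L pq.1 pq.2)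
    (g : J × J → (I → J → ℝ) → ℝ)
    (hgmono : ∀ pq ∈ H, ∀ Z Z' : I → J → ℝ,
      (∀ i j, Z i j = 0 ∨ Z i j = 1) → (∀ i j, Z' i j = 0 ∨ Z' i j = 1) →
      (∀ i j, Z i j ≤ Z' i j) → g pq Z ≤ g pq Z')
    (hgL : ∀ pq ∈ H, ∀ Z : I → J → ℝ,
      (∀ i j, Z i j = 0 ∨ Z i j = 1) → L pq.1 pq.2 ≤ g pq Z)
    (α : (I → J → ℝ) → ℝ)
    (hα : ∀ Z, α Z = ∑ pq ∈ H, w pq.1 pq.2 * (∑ i : I, Z i pq.1 * Z i pq.2) *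
      (1 / L pq.1 pq.2 - 1 / g pq Z))
    (X Y : I → J → ℝ)
    (hX : ∀ i j, X i j = 0 ∨ X i j = 1) (hY : ∀ i j, Y i j = 0 ∨ Y i j = 1)
    (hYX : ∀ i j, Y i j ≤ X i j) :
    α Y ≤ α X := by
  have hnnY : ∀ i j, 0 ≤ Y i j := fun i j => by rcases hY i j with h | h <;> simp [h]
  have hnnX : ∀ i j, 0 ≤ X i j := fun i j => by rcases hX i j with h | h <;> simp [h]
  rw [hα X, hα Y]
  apply Finset.sum_le_sum
  intro pq hpq
  have hLpos := hL pq hpq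
  have hgYpos : 0 < g pq Y := lt_of_lt_of_le hLpos (hgL pq hpq Y hY)
  have hgXpos : 0 < g pq X := lt_of_lt_of_le hLpos (hgL pq hpq X hX)
  have hsum : (∑ i : I, Y i pq.1 * Y i pq.2) ≤ ∑ i : I, X i pq.1 * X i pq.2 :=
    Finset.sum_le_sum fun i _ =>
      mul_le_mul (hYX i pq.1) (hYX i pq.2) (hnnY i pq.2) (hnnX i pq.1)
  have hsumnn : 0 ≤ ∑ i : I, Y i pq.1 * Y i pq.2 :=
    Finset.sum_nonneg fun i _ => mul_nonneg (hnnY i pq.1) (hnnY i pq.2)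
  have hgap : (1 / L pq.1 pq.2 - 1 / g pq Y) ≤ (1 / L pq.1 pq.2 - 1 / g pq X) := by
    have := hgmono pq hpq Y X hY hX hYX
    gcongr
  have hgapnn : 0 ≤ 1 / L pq.1 pq.2 - 1 / g pq Y := by
    have := hgL pq hpq Y hY
    have : 1 / g pq Y ≤ 1 / L pq.1 pq.2 := by gcongr
    linarith
  have hwnn := hw pq hpq
  calc w pq.1 pq.2 * (∑ i : I, Y i pq.1 * Y i pq.2) * (1 / L pq.1 pq.2 - 1 / g pq Y)
      ≤ w pq.1 pq.2 * (∑ i : I, X i pq.1 * X i pq.2) * (1 / L pq.1 pq.2 - 1 / g pq X) := by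
        apply mul_le_mul
        · exact mul_le_mul_of_nonneg_left hsum hwnn
        · exact hgap
        · exact hgapnn
        · exact mul_nonneg hwnn (hsumnn.trans hsum)
end

section
/- Let A_p, A_q, G be square real matrices of the same size such that G is entrywise nonnegative, A_q − G is entrywise nonnegative, and A_q ≤ A_p entrywise. Then for every natural number s ≥ 1, the entrywise inequality (A_p − G)^s + A_q^s ≤ A_p^s + (A_q − G)^s holds; equivalently, (A_p − G)^s − A_p^s − (A_q − G)^s + A_q^s ≤ 0 entrywise. -/
private lemma mul_entry_nonneg {n : Type*} [Fintype n] (A B : Matrix n n ℝ)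
    (hA : ∀ i j, 0 ≤ A i j) (hB : ∀ i j, 0 ≤ B i j) : ∀ i j, 0 ≤ (A * B) i j := by
  intro i j
  rw [Matrix.mul_apply]
  exact Finset.sum_nonneg fun k _ => mul_nonneg (hA i k) (hB k j)

private lemma mul_entry_mono {n : Type*} [Fintype n] (A A' B B' : Matrix n n ℝ)
    (h0A : ∀ i j, 0 ≤ A i j) (hA : ∀ i j, A i j ≤ A' i j)
    (h0B : ∀ i j, 0 ≤ B i j) (hB : ∀ i j, B i j ≤ B' i j) :
    ∀ i j, (A * B) i j ≤ (A' * B') i j := by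
  intro i j
  rw [Matrix.mul_apply, Matrix.mul_apply]
  refine Finset.sum_le_sum fun k _ => ?_
  exact mul_le_mul (hA i k) (hB k j) (h0B k j) (le_trans (h0A i k) (hA i k))

/-- The core entrywise inequality (proved by induction on `s` in the
paper) behind submodularity of the Katz-similarity decrement:
`(A_p − G)^s + A_q^s ≤ A_p^s + (A_q − G)^s` entrywise. -/
theorem stmt_9 {n : Type*} [Fintype n] [DecidableEq n] (Ap Aq G : Matrix n n ℝ)
    (hG : ∀ i j, 0 ≤ G i j) (hAqG : ∀ i j, 0 ≤ (Aq - G) i j)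
    (hqp : ∀ i j, Aq i j ≤ Ap i j) (s : ℕ) (hs : 1 ≤ s) :
    ∀ i j, ((Ap - G) ^ s + Aq ^ s) i j ≤ (Ap ^ s + (Aq - G) ^ s) i j := by
  set Bp := Ap - G with hBp
  set Bq := Aq - G with hBq
  -- basic entrywise facts
  have h0Bq : ∀ i j, 0 ≤ Bq i j := hAqG
  have h0Aq : ∀ i j, 0 ≤ Aq i j := by
    intro i j
    have := hAqG i j
    have := hG i j
    simp [hBq, Matrix.sub_apply] at *
    linarith
  have hBqBp : ∀ i j, Bq i j ≤ Bp i j := by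
    intro i j; simp [hBp, hBq, Matrix.sub_apply]; exact hqp i j
  have hBqAq : ∀ i j, Bq i j ≤ Aq i j := by
    intro i j; simp [hBq, Matrix.sub_apply]; exact hG i j
  have h0Ap : ∀ i j, 0 ≤ Ap i j := fun i j => le_trans (h0Aq i j) (hqp i j)
  have hApAq : ∀ i j, 0 ≤ (Ap - Aq) i j := by
    intro i j; simp [Matrix.sub_apply]; exact hqp i j
  -- strengthened induction
  have key : ∀ t : ℕ, (∀ i j, 0 ≤ (Bq ^ t) i j) ∧ (∀ i j, (Bq ^ t) i j ≤ (Bp ^ t) i j)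
      ∧ (∀ i j, (Bq ^ t) i j ≤ (Aq ^ t) i j) ∧ (∀ i j, (Aq ^ t) i j ≤ (Ap ^ t) i j)
      ∧ (∀ i j, 0 ≤ (Ap ^ t + Bq ^ t - Bp ^ t - Aq ^ t) i j) := by
    intro t
    induction t with
    | zero =>
      simp
      intro i j
      rw [Matrix.one_apply]
      positivity
    | succ t ih =>
      obtain ⟨h1, h2, h3, h4, h5⟩ := ih
      have h0Bpt : ∀ i j, 0 ≤ (Bp ^ t) i j := fun i j => le_trans (h1 i j) (h2 i j)
      have h0Aqt : ∀ i j, 0 ≤ (Aq ^ t) i j := fun i j => le_trans (h1 i j) (h3 i j)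
      have h0Apt : ∀ i j, 0 ≤ (Ap ^ t) i j := fun i j => le_trans (h0Aqt i j) (h4 i j)
      have e1 : Bq ^ (t + 1) = Bq * Bq ^ t := pow_succ' Bq t
      have e2 : Bp ^ (t + 1) = Bp * Bp ^ t := pow_succ' Bp t
      have e3 : Aq ^ (t + 1) = Aq * Aq ^ t := pow_succ' Aq t
      have e4 : Ap ^ (t + 1) = Ap * Ap ^ t := pow_succ' Ap t
      refine ⟨?_, ?_, ?_, ?_, ?_⟩
      · rw [e1]; exact mul_entry_nonneg _ _ h0Bq h1
      · rw [e1, e2]; exact mul_entry_mono _ _ _ _ h0Bq hBqBp h1 h2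
      · rw [e1, e3]; exact mul_entry_mono _ _ _ _ h0Bq hBqAq h1 h3
      · rw [e3, e4]; exact mul_entry_mono _ _ _ _ h0Aq hqp h0Aqt h4
      · -- the algebraic identity
        have hid : Ap ^ (t + 1) + Bq ^ (t + 1) - Bp ^ (t + 1) - Aq ^ (t + 1)
            = Ap * (Ap ^ t + Bq ^ t - Bp ^ t - Aq ^ t)
              + G * (Bp ^ t - Bq ^ t) + (Ap - Aq) * (Aq ^ t - Bq ^ t) := by
          rw [e1, e2, e3, e4, hBp, hBq]
          noncomm_ring
        intro i j
        rw [hid]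
        have t1 : 0 ≤ (Ap * (Ap ^ t + Bq ^ t - Bp ^ t - Aq ^ t)) i j :=
          mul_entry_nonneg _ _ h0Ap h5 i j
        have t2 : 0 ≤ (G * (Bp ^ t - Bq ^ t)) i j := by
          refine mul_entry_nonneg _ _ hG (fun i j => ?_) i j
          simp [Matrix.sub_apply]; exact h2 i j
        have t3 : 0 ≤ ((Ap - Aq) * (Aq ^ t - Bq ^ t)) i j := by
          refine mul_entry_nonneg _ _ hApAq (fun i j => ?_) i j
          simp [Matrix.sub_apply]; exact h3 i j
        simp only [Matrix.add_apply]
        linarith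
  intro i j
  have := (key s).2.2.2.2 i j
  simp only [Matrix.add_apply, Matrix.sub_apply] at this ⊢
  linarith
end

section
/- Let E be a finite set, and let A⁰ be an entrywise nonnegative square real matrix. For each e ∈ E, let G_e be an entrywise nonnegative matrix of the same size, and assume Σ_{e∈E} G_e ≤ A⁰ entrywise. For S ⊆ E define A(S) = A⁰ − Σ_{e∈S} G_e. Let β ≥ 0 and fix indices u, v, and assume the function l ↦ β^l ((A⁰)^l)_{uv} is summable over l ≥ 1. Define the set function g_{uv}(S) = Σ_{l≥1} β^l ((A⁰)^l − A(S)^l)_{uv}. Then: (i) g_{uv} is monotone nondecreasing, i.e., S ⊆ S' ⊆ E implies g_{uv}(S) ≤ g_{uv}(S'); and (ii) g_{uv} is submodular, i.e., for all S ⊆ S' ⊆ E and e ∈ E \ S', g_{uv}(S ∪ {e}) − g_{uv}(S) ≥ g_{uv}(S' ∪ {e}) − g_{uv}(S'). -/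
section aux

variable {n : Type*} [Fintype n] [DecidableEq n]

/-- entrywise: product of entrywise-bounded nonneg matrices -/
lemma ent_mul_le {X X' Y Y' : Matrix n n ℝ}
    (hX0 : ∀ i j, 0 ≤ X i j) (hXX : ∀ i j, X i j ≤ X' i j)
    (hY0 : ∀ i j, 0 ≤ Y i j) (hYY : ∀ i j, Y i j ≤ Y' i j) :
    ∀ i j, (X * Y) i j ≤ (X' * Y') i j := by
  intro i j
  simp only [Matrix.mul_apply]
  refine Finset.sum_le_sum fun k _ => ?_
  exact mul_le_mul (hXX i k) (hYY k j) (hY0 k j) ((hX0 i k).trans (hXX i k))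

lemma ent_mul_nonneg {X Y : Matrix n n ℝ}
    (hX0 : ∀ i j, 0 ≤ X i j) (hY0 : ∀ i j, 0 ≤ Y i j) :
    ∀ i j, 0 ≤ (X * Y) i j := by
  intro i j
  simp only [Matrix.mul_apply]
  exact Finset.sum_nonneg fun k _ => mul_nonneg (hX0 i k) (hY0 k j)

/-- powers preserve entrywise nonnegativity and entrywise order -/
lemma ent_pow {X X' : Matrix n n ℝ}
    (hX0 : ∀ i j, 0 ≤ X i j) (hXX : ∀ i j, X i j ≤ X' i j) (l : ℕ) :
    (∀ i j, 0 ≤ (X ^ l) i j) ∧ (∀ i j, (X ^ l) i j ≤ (X' ^ l) i j) := by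
  induction l with
  | zero =>
      simp only [pow_zero]
      exact ⟨fun i j => by by_cases h : i = j <;> simp [Matrix.one_apply, h],
        fun i j => le_refl _⟩
  | succ l ih =>
      rw [pow_succ, pow_succ]
      exact ⟨ent_mul_nonneg ih.1 hX0, ent_mul_le ih.1 ih.2 hX0 hXX⟩

/-- key submodularity lemma on matrix powers -/
lemma ent_key {A B C : Matrix n n ℝ}
    (hB0 : ∀ i j, 0 ≤ B i j) (hBC0 : ∀ i j, 0 ≤ (B - C) i j)
    (hC0 : ∀ i j, 0 ≤ C i j) (hBA : ∀ i j, B i j ≤ A i j) (l : ℕ) :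
    (∀ i j, 0 ≤ (B ^ l - (B - C) ^ l) i j) ∧
    (∀ i j, (B ^ l - (B - C) ^ l) i j ≤ (A ^ l - (A - C) ^ l) i j) := by
  have hBCA : ∀ i j, (B - C) i j ≤ (A - C) i j := by
    intro i j; simp only [Matrix.sub_apply]; linarith [hBA i j]
  have hBCB : ∀ i j, (B - C) i j ≤ B i j := by
    intro i j; simp only [Matrix.sub_apply]; linarith [hC0 i j]
  induction l with
  | zero => simp
  | succ l ih =>
      have idB : B ^ (l + 1) - (B - C) ^ (l + 1)
          = B * (B ^ l - (B - C) ^ l) + C * (B - C) ^ l := by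
        rw [pow_succ', pow_succ']; noncomm_ring
      have idA : A ^ (l + 1) - (A - C) ^ (l + 1)
          = A * (A ^ l - (A - C) ^ l) + C * (A - C) ^ l := by
        rw [pow_succ', pow_succ']; noncomm_ring
      have hBCpow := ent_pow hBC0 hBCA l
      constructor
      · intro i j
        rw [idB]
        simp only [Matrix.add_apply]
        exact add_nonneg (ent_mul_nonneg hB0 ih.1 i j)
          (ent_mul_nonneg hC0 hBCpow.1 i j)
      · intro i j
        rw [idB, idA]
        simp only [Matrix.add_apply]
        refine add_le_add (ent_mul_le hB0 hBA ih.1 ih.2 i j)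
          (ent_mul_le hC0 (fun i j => le_refl _) hBCpow.1 hBCpow.2 i j)

end aux

/-- The Katz-similarity decrement
`g_{uv}(S) = Σ_{l≥1} β^l ((A⁰)^l − A(S)^l)_{uv}`, where `A(S) = A⁰ − Σ_{e∈S} G_e`,
is a monotone nondecreasing and submodular set function of the deleted edge set `S`. -/
theorem stmt_10 {n : Type*} [Fintype n] [DecidableEq n]
    {E : Type*} [Fintype E] [DecidableEq E]
    (A0 : Matrix n n ℝ) (hA0 : ∀ i j, 0 ≤ A0 i j)
    (G : E → Matrix n n ℝ) (hG : ∀ e, ∀ i j, 0 ≤ G e i j)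
    (hGA0 : ∀ i j, (∑ e : E, G e) i j ≤ A0 i j)
    (β : ℝ) (hβ : 0 ≤ β) (u v : n)
    (hsummable : Summable fun l : ℕ => β ^ (l + 1) * (A0 ^ (l + 1)) u v)
    (A : Finset E → Matrix n n ℝ) (hA : ∀ S, A S = A0 - ∑ e ∈ S, G e)
    (g : Finset E → ℝ)
    (hg : ∀ S, g S = ∑' l : ℕ, β ^ (l + 1) * (A0 ^ (l + 1) - A S ^ (l + 1)) u v) :
    (∀ S S' : Finset E, S ⊆ S' → g S ≤ g S') ∧
    (∀ S S' : Finset E, S ⊆ S' → ∀ e : E, e ∉ S' →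
      g (insert e S') - g S' ≤ g (insert e S) - g S) := by
  -- basic entrywise facts about A S
  have hsum_apply : ∀ (S : Finset E) (i j : n),
      (∑ e ∈ S, G e) i j = ∑ e ∈ S, G e i j := by
    intro S i j
    simp [Matrix.sum_apply]
  have hApos : ∀ (S : Finset E) (i j : n), 0 ≤ A S i j := by
    intro S i j
    rw [hA S]
    simp only [Matrix.sub_apply]
    have h1 : ∑ e ∈ S, G e i j ≤ ∑ e : E, G e i j :=
      Finset.sum_le_sum_of_subset_of_nonneg (Finset.subset_univ S)
        (fun e _ _ => hG e i j)
    have h2 := hGA0 i j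
    rw [hsum_apply Finset.univ i j] at h2
    rw [hsum_apply S i j]
    linarith
  have hAmono : ∀ (S S' : Finset E), S ⊆ S' → ∀ i j, A S' i j ≤ A S i j := by
    intro S S' hSS i j
    rw [hA S, hA S']
    simp only [Matrix.sub_apply, hsum_apply]
    have : ∑ e ∈ S, G e i j ≤ ∑ e ∈ S', G e i j :=
      Finset.sum_le_sum_of_subset_of_nonneg hSS (fun e _ _ => hG e i j)
    linarith
  have hAle0 : ∀ (S : Finset E) (i j : n), A S i j ≤ A0 i j := by
    intro S i j
    have := hAmono ∅ S (Finset.empty_subset S) i j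
    simpa [hA ∅] using this
  have hAins : ∀ (S : Finset E) (e : E), e ∉ S → A (insert e S) = A S - G e := by
    intro S e he
    rw [hA, hA, Finset.sum_insert he]
    abel
  -- summability of each power series
  have hsumm : ∀ (M : Matrix n n ℝ), (∀ i j, 0 ≤ M i j) → (∀ i j, M i j ≤ A0 i j) →
      Summable fun l : ℕ => β ^ (l + 1) * (M ^ (l + 1)) u v := by
    intro M hM0 hMle
    refine Summable.of_nonneg_of_le (fun l => ?_) (fun l => ?_) hsummable
    · exact mul_nonneg (pow_nonneg hβ _) ((ent_pow hM0 hMle (l + 1)).1 u v)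
    · exact mul_le_mul_of_nonneg_left ((ent_pow hM0 hMle (l + 1)).2 u v)
        (pow_nonneg hβ _)
  have hsummS : ∀ S : Finset E,
      Summable fun l : ℕ => β ^ (l + 1) * (A S ^ (l + 1)) u v := fun S =>
    hsumm (A S) (hApos S) (hAle0 S)
  -- g S = T0 - T S
  have hgseq : ∀ S : Finset E,
      g S = (∑' l : ℕ, β ^ (l + 1) * (A0 ^ (l + 1)) u v)
            - ∑' l : ℕ, β ^ (l + 1) * (A S ^ (l + 1)) u v := by
    intro S
    rw [hg S, ← Summable.tsum_sub hsummable (hsummS S)]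
    congr 1
    funext l
    simp only [Matrix.sub_apply]
    ring
  constructor
  · -- monotone
    intro S S' hSS
    rw [hgseq S, hgseq S']
    have : (∑' l : ℕ, β ^ (l + 1) * (A S' ^ (l + 1)) u v)
        ≤ ∑' l : ℕ, β ^ (l + 1) * (A S ^ (l + 1)) u v := by
      refine Summable.tsum_le_tsum (fun l => ?_) (hsummS S') (hsummS S)
      exact mul_le_mul_of_nonneg_left
        ((ent_pow (hApos S') (hAmono S S' hSS) (l + 1)).2 u v) (pow_nonneg hβ _)
    linarith
  · -- submodular
    intro S S' hSS e he
    have heS : e ∉ S := fun h => he (hSS h)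
    rw [hgseq S, hgseq S', hgseq (insert e S), hgseq (insert e S')]
    have key : (∑' l : ℕ, β ^ (l + 1) * (A S' ^ (l + 1)) u v)
          - (∑' l : ℕ, β ^ (l + 1) * (A (insert e S') ^ (l + 1)) u v)
        ≤ (∑' l : ℕ, β ^ (l + 1) * (A S ^ (l + 1)) u v)
          - ∑' l : ℕ, β ^ (l + 1) * (A (insert e S) ^ (l + 1)) u v := by
      rw [← Summable.tsum_sub (hsummS S') (hsummS (insert e S')),
          ← Summable.tsum_sub (hsummS S) (hsummS (insert e S))]
      refine Summable.tsum_le_tsum (fun l => ?_)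
        ((hsummS S').sub (hsummS (insert e S')))
        ((hsummS S).sub (hsummS (insert e S)))
      rw [hAins S e heS, hAins S' e he]
      have hk := (ent_key (A := A S) (B := A S') (C := G e) (hApos S')
        (by rw [← hAins S' e he]; exact hApos (insert e S'))
        (hG e) (hAmono S S' hSS) (l + 1)).2 u v
      simp only [Matrix.sub_apply] at hk
      have hb : (0:ℝ) ≤ β ^ (l + 1) := pow_nonneg hβ _
      nlinarith [hk]
    linarith
end

section
/- Let E be a finite set, A⁰ an entrywise nonnegative square real matrix indexed by a finite vertex set, and for each e ∈ E let G_e be an entrywise nonnegative matrix of the same size with Σ_{e∈E} G_e ≤ A⁰ entrywise; for S ⊆ E set A(S) = A⁰ − Σ_{e∈S} G_e. Let β ≥ 0 and let H be a finite set of vertex pairs with weights w_{uv} ≥ 0 for (u,v) ∈ H; assume that for each (u,v) ∈ H the function l ↦ β^l ((A⁰)^l)_{uv} is summable over l ≥ 1, and set g_{uv}(S) = Σ_{l≥1} β^l ((A⁰)^l − A(S)^l)_{uv}. Then the total decrement G_t(S) = Σ_{(u,v)∈H} w_{uv} · g_{uv}(S) is a monotone nondecreasing and submodular set function on subsets of E: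 S ⊆ S' implies G_t(S) ≤ G_t(S'), and for all S ⊆ S' and e ∈ E \ S', G_t(S ∪ {e}) − G_t(S) ≥ G_t(S' ∪ {e}) − G_t(S'). -/
section Aux

variable {n : Type*} [Fintype n] [DecidableEq n]

private lemma pow_apply_nonneg (X : Matrix n n ℝ) (hX : ∀ i j, 0 ≤ X i j) :
    ∀ (l : ℕ) (i j : n), 0 ≤ (X ^ l) i j := by
  intro l
  induction l with
  | zero => intro i j; simp [Matrix.one_apply]; split <;> norm_num
  | succ l ih =>
    intro i j
    rw [pow_succ, Matrix.mul_apply]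
    exact Finset.sum_nonneg fun k _ => mul_nonneg (ih i k) (hX k j)

private lemma pow_apply_mono (X Y : Matrix n n ℝ) (hX : ∀ i j, 0 ≤ X i j)
    (hXY : ∀ i j, X i j ≤ Y i j) :
    ∀ (l : ℕ) (i j : n), (X ^ l) i j ≤ (Y ^ l) i j := by
  intro l
  induction l with
  | zero => intro i j; simp
  | succ l ih =>
    intro i j
    rw [pow_succ, pow_succ, Matrix.mul_apply, Matrix.mul_apply]
    refine Finset.sum_le_sum fun k _ => ?_
    exact mul_le_mul (ih i k) (hXY k j) (hX k j) (pow_apply_nonneg Y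
      (fun i j => le_trans (hX i j) (hXY i j)) l i k)

private lemma pow_expand (X Y : Matrix n n ℝ) (l : ℕ) (i j : n) :
    (X ^ (l + 1)) i j - (Y ^ (l + 1)) i j
      = (∑ k, X i k * ((X ^ l) k j - (Y ^ l) k j))
        + ∑ k, (X i k - Y i k) * ((Y ^ l) k j) := by
  rw [pow_succ', pow_succ', Matrix.mul_apply, Matrix.mul_apply,
    ← Finset.sum_add_distrib, ← Finset.sum_sub_distrib]
  exact Finset.sum_congr rfl fun k _ => by ring

private lemma key_ineq (B' C D : Matrix n n ℝ)
    (hC : ∀ i j, 0 ≤ C i j) (hBC : ∀ i j, 0 ≤ (B' - C) i j)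
    (hD : ∀ i j, 0 ≤ D i j) :
    ∀ (l : ℕ) (i j : n),
      (B' ^ l) i j - ((B' - C) ^ l) i j
        ≤ ((B' + D) ^ l) i j - ((B' + D - C) ^ l) i j := by
  have hB' : ∀ i j, 0 ≤ B' i j := fun i j => by
    have h1 := hBC i j; have h2 := hC i j
    simp only [Matrix.sub_apply] at h1; linarith
  have hBCle : ∀ i j, (B' - C) i j ≤ B' i j := fun i j => by
    have := hC i j; simp only [Matrix.sub_apply]; linarith
  have hB'le : ∀ i j, B' i j ≤ (B' + D) i j := fun i j => by
    have := hD i j; simp only [Matrix.add_apply]; linarith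
  have hBCle2 : ∀ i j, (B' - C) i j ≤ (B' + D - C) i j := fun i j => by
    have := hD i j; simp only [Matrix.sub_apply, Matrix.add_apply]; linarith
  intro l
  induction l with
  | zero => intro i j; simp
  | succ l ih =>
    intro i j
    rw [pow_expand B' (B' - C) l i j, pow_expand (B' + D) (B' + D - C) l i j]
    refine add_le_add ?_ ?_
    · refine Finset.sum_le_sum fun k _ => ?_
      refine mul_le_mul (hB'le i k) (ih k j) ?_ ?_
      · exact sub_nonneg.2 (pow_apply_mono (B' - C) B' hBC hBCle l k j)
      · exact le_trans (hB' i k) (hB'le i k)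
    · have h1 : ∀ k, B' i k - (B' - C) i k = C i k := fun k => by
        simp only [Matrix.sub_apply]; ring
      have h2 : ∀ k, (B' + D) i k - (B' + D - C) i k = C i k := fun k => by
        simp only [Matrix.sub_apply, Matrix.add_apply]; ring
      refine Finset.sum_le_sum fun k _ => ?_
      rw [h1 k, h2 k]
      exact mul_le_mul_of_nonneg_left
        (pow_apply_mono (B' - C) (B' + D - C) hBC hBCle2 l k j) (hC i k)

end Aux

/-- The total weighted Katz-similarity decrement
`G_t(S) = Σ_{(u,v)∈H} w_{uv} g_{uv}(S)`, where
`g_{uv}(S) = Σ_{l≥1} β^l ((A⁰)^l − A(S)^l)_{uv}` and `A(S) = A⁰ − Σ_{e∈S} G_e`,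
is a monotone nondecreasing and submodular set function of the deleted edge set `S`. -/
theorem stmt_11 {n : Type*} [Fintype n] [DecidableEq n]
    {E : Type*} [Fintype E] [DecidableEq E]
    (A0 : Matrix n n ℝ) (hA0 : ∀ i j, 0 ≤ A0 i j)
    (G : E → Matrix n n ℝ) (hG : ∀ e, ∀ i j, 0 ≤ G e i j)
    (hGA0 : ∀ i j, (∑ e : E, G e) i j ≤ A0 i j)
    (β : ℝ) (hβ : 0 ≤ β)
    (H : Finset (n × n)) (w : n → n → ℝ) (hw : ∀ uv ∈ H, 0 ≤ w uv.1 uv.2)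
    (hsummable : ∀ uv ∈ H,
      Summable fun l : ℕ => β ^ (l + 1) * (A0 ^ (l + 1)) uv.1 uv.2)
    (A : Finset E → Matrix n n ℝ) (hA : ∀ S, A S = A0 - ∑ e ∈ S, G e)
    (g : n × n → Finset E → ℝ)
    (hg : ∀ uv S,
      g uv S = ∑' l : ℕ, β ^ (l + 1) * (A0 ^ (l + 1) - A S ^ (l + 1)) uv.1 uv.2)
    (Gt : Finset E → ℝ) (hGt : ∀ S, Gt S = ∑ uv ∈ H, w uv.1 uv.2 * g uv S) :
    (∀ S S' : Finset E, S ⊆ S' → Gt S ≤ Gt S') ∧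
    (∀ S S' : Finset E, S ⊆ S' → ∀ e : E, e ∉ S' →
      Gt (insert e S') - Gt S' ≤ Gt (insert e S) - Gt S) := by
  -- basic entrywise facts
  have hsum_nonneg : ∀ (T : Finset E) (i j : n), 0 ≤ (∑ e ∈ T, G e) i j := by
    intro T i j
    rw [Matrix.sum_apply]
    exact Finset.sum_nonneg fun e _ => hG e i j
  have hsum_mono : ∀ (T T' : Finset E), T ⊆ T' → ∀ i j,
      (∑ e ∈ T, G e) i j ≤ (∑ e ∈ T', G e) i j := by
    intro T T' hTT' i j
    rw [Matrix.sum_apply, Matrix.sum_apply]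
    exact Finset.sum_le_sum_of_subset_of_nonneg hTT' fun e _ _ => hG e i j
  have hsum_le_A0 : ∀ (T : Finset E) (i j : n), (∑ e ∈ T, G e) i j ≤ A0 i j :=
    fun T i j => le_trans (hsum_mono T Finset.univ (Finset.subset_univ T) i j) (hGA0 i j)
  have hA_nonneg : ∀ (T : Finset E) (i j : n), 0 ≤ A T i j := by
    intro T i j
    rw [hA, Matrix.sub_apply]
    linarith [hsum_le_A0 T i j]
  have hA_le : ∀ (T : Finset E) (i j : n), A T i j ≤ A0 i j := by
    intro T i j
    rw [hA, Matrix.sub_apply]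
    linarith [hsum_nonneg T i j]
  -- rewrite g entrywise
  have hg' : ∀ (uv : n × n) (T : Finset E),
      g uv T = ∑' l : ℕ, β ^ (l + 1) *
        ((A0 ^ (l + 1)) uv.1 uv.2 - ((A T) ^ (l + 1)) uv.1 uv.2) := by
    intro uv T
    rw [hg]
    exact tsum_congr fun l => by rw [Matrix.sub_apply]
  -- summability
  have hSummA : ∀ uv ∈ H, ∀ T : Finset E,
      Summable (fun l : ℕ => β ^ (l + 1) *
        ((A0 ^ (l + 1)) uv.1 uv.2 - ((A T) ^ (l + 1)) uv.1 uv.2)) := by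
    intro uv huv T
    refine Summable.of_nonneg_of_le (fun l => ?_) (fun l => ?_) (hsummable uv huv)
    · exact mul_nonneg (pow_nonneg hβ _)
        (sub_nonneg.2 (pow_apply_mono (A T) A0 (hA_nonneg T) (hA_le T) (l + 1) uv.1 uv.2))
    · refine mul_le_mul_of_nonneg_left ?_ (pow_nonneg hβ _)
      linarith [pow_apply_nonneg (A T) (hA_nonneg T) (l + 1) uv.1 uv.2]
  -- monotonicity of g
  have hg_mono : ∀ uv ∈ H, ∀ S S' : Finset E, S ⊆ S' → g uv S ≤ g uv S' := by
    intro uv huv S S' hSS'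
    rw [hg' uv S, hg' uv S']
    refine Summable.tsum_le_tsum (fun l => ?_) (hSummA uv huv S) (hSummA uv huv S')
    refine mul_le_mul_of_nonneg_left ?_ (pow_nonneg hβ _)
    have : ∀ i j, A S' i j ≤ A S i j := by
      intro i j
      rw [hA, hA, Matrix.sub_apply, Matrix.sub_apply]
      linarith [hsum_mono S S' hSS' i j]
    linarith [pow_apply_mono (A S') (A S) (hA_nonneg S') this (l + 1) uv.1 uv.2]
  -- difference formula
  have hdiff : ∀ uv ∈ H, ∀ (T T' : Finset E),
      g uv T' - g uv T = ∑' l : ℕ, β ^ (l + 1) *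
        (((A T) ^ (l + 1)) uv.1 uv.2 - ((A T') ^ (l + 1)) uv.1 uv.2) := by
    intro uv huv T T'
    rw [hg' uv T', hg' uv T, ← Summable.tsum_sub (hSummA uv huv T') (hSummA uv huv T)]
    exact tsum_congr fun l => by ring
  have hSummDiff : ∀ uv ∈ H, ∀ (T T' : Finset E),
      Summable (fun l : ℕ => β ^ (l + 1) *
        (((A T) ^ (l + 1)) uv.1 uv.2 - ((A T') ^ (l + 1)) uv.1 uv.2)) := by
    intro uv huv T T'
    refine ((hSummA uv huv T').sub (hSummA uv huv T)).congr fun l => by ring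
  -- submodularity of g
  have hg_sub : ∀ uv ∈ H, ∀ S S' : Finset E, S ⊆ S' → ∀ e : E, e ∉ S' →
      g uv (insert e S') - g uv S' ≤ g uv (insert e S) - g uv S := by
    intro uv huv S S' hSS' e heS'
    have heS : e ∉ S := fun h => heS' (hSS' h)
    set D : Matrix n n ℝ := ∑ e' ∈ S' \ S, G e' with hD
    have hmeq1 : A (insert e S') = A S' - G e := by
      rw [hA, hA, Finset.sum_insert heS']
      abel
    have hmeq2 : A S = A S' + D := by
      rw [hA, hA, hD, ← Finset.sum_sdiff hSS']
      abel
    have hmeq3 : A (insert e S) = A S' + D - G e := by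
      have h0 : A (insert e S) = A S - G e := by
        rw [hA, hA S, Finset.sum_insert heS]
        abel
      rw [h0, hmeq2]
    rw [hdiff uv huv S' (insert e S'), hdiff uv huv S (insert e S)]
    refine Summable.tsum_le_tsum (fun l => ?_) (hSummDiff uv huv S' (insert e S'))
      (hSummDiff uv huv S (insert e S))
    refine mul_le_mul_of_nonneg_left ?_ (pow_nonneg hβ _)
    rw [hmeq1, hmeq2, hmeq3]
    refine key_ineq (A S') (G e) D (hG e) ?_ ?_ (l + 1) uv.1 uv.2
    · intro i j
      rw [← hmeq1]
      exact hA_nonneg _ i j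
    · intro i j
      rw [hD, Matrix.sum_apply]
      exact Finset.sum_nonneg fun e' _ => hG e' i j
  constructor
  · intro S S' hSS'
    rw [hGt, hGt]
    exact Finset.sum_le_sum fun uv huv =>
      mul_le_mul_of_nonneg_left (hg_mono uv huv S S' hSS') (hw uv huv)
  · intro S S' hSS' e heS'
    rw [hGt, hGt, hGt, hGt, ← Finset.sum_sub_distrib, ← Finset.sum_sub_distrib]
    refine Finset.sum_le_sum fun uv huv => ?_
    rw [← mul_sub, ← mul_sub]
    exact mul_le_mul_of_nonneg_left (hg_sub uv huv S S' hSS' e heS') (hw uv huv)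
end

section
/- Let n ≥ 1, let D : {1,…,n} → ℕ be positive integers (node degrees), let W > 0 be a real number, and let k be a natural number with k < D_i for every i. Let j be an index with D_j ≤ D_i for all i. Then for every z : {1,…,n} → ℕ with Σ_{i=1}^n z_i ≤ k, one has Σ_{i=1}^n W/(D_i − z_i) ≤ W/(D_j − k) + Σ_{i ≠ j} W/D_i. In other words, the maximum of Σ_i W/(D_i − z_i) subject to Σ_i z_i ≤ k is attained by allocating all k deletions to an index with smallest D. -/
/-- Pointwise bound: `W/(a - zi) ≤ W/a + W*zi/(b*(b-kr))` when `zi ≤ kr < b ≤ a`. -/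
lemma aux_13 (W a b zi kr : ℝ) (hW : 0 < W) (hz : 0 ≤ zi) (hzk : zi ≤ kr)
    (hba : b ≤ a) (hkb : kr < b) (hb : 0 < b) :
    W / (a - zi) ≤ W / a + W * zi / (b * (b - kr)) := by
  have ha : 0 < a := lt_of_lt_of_le hb hba
  have haz : 0 < a - zi := by linarith
  have hbk : 0 < b - kr := by linarith
  have hden : b * (b - kr) ≤ a * (a - zi) := by nlinarith
  have hkey : W / (a - zi) = W / a + W * zi / (a * (a - zi)) := by
    field_simp; ring
  rw [hkey]
  gcongr

/-- In the degree-based approximation of the ACT attack with equal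
weights, the objective `Σ_i W/(D_i − z_i)` under budget `Σ_i z_i ≤ k` is maximized by
allocating all `k` deletions to an index `j` of smallest degree. -/
theorem stmt_13 (n : ℕ) (hn : 1 ≤ n) (D : Fin n → ℕ) (hD : ∀ i, 0 < D i)
    (W : ℝ) (hW : 0 < W) (k : ℕ) (hk : ∀ i, k < D i)
    (j : Fin n) (hj : ∀ i, D j ≤ D i)
    (z : Fin n → ℕ) (hz : ∑ i, z i ≤ k) :
    ∑ i, W / ((D i : ℝ) - (z i : ℝ)) ≤
      W / ((D j : ℝ) - (k : ℝ)) + ∑ i ∈ Finset.univ.erase j, W / (D i : ℝ) := by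
  have hb : (0 : ℝ) < D j := by exact_mod_cast hD j
  have hkb : (k : ℝ) < D j := by exact_mod_cast hk j
  have hbk : (0 : ℝ) < (D j : ℝ) - k := by linarith
  have step1 : ∀ i, W / ((D i : ℝ) - (z i : ℝ)) ≤
      W / (D i : ℝ) + W * (z i : ℝ) / ((D j : ℝ) * ((D j : ℝ) - k)) := by
    intro i
    apply aux_13 _ _ _ _ _ hW (by positivity)
    · have : z i ≤ k := le_trans (Finset.single_le_sum (fun _ _ => Nat.zero_le _)
        (Finset.mem_univ i)) hz
      exact_mod_cast this
    · exact_mod_cast hj i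
    · exact hkb
    · exact hb
  calc ∑ i, W / ((D i : ℝ) - (z i : ℝ))
      ≤ ∑ i, (W / (D i : ℝ) + W * (z i : ℝ) / ((D j : ℝ) * ((D j : ℝ) - k))) :=
        Finset.sum_le_sum fun i _ => step1 i
    _ = (∑ i, W / (D i : ℝ)) + (∑ i, (z i : ℝ)) * (W / ((D j : ℝ) * ((D j : ℝ) - k))) := by
        rw [Finset.sum_add_distrib, Finset.sum_mul]
        congr 1
        exact Finset.sum_congr rfl fun i _ => by ring
    _ ≤ (∑ i, W / (D i : ℝ)) + (k : ℝ) * (W / ((D j : ℝ) * ((D j : ℝ) - k))) := by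
        gcongr
        exact_mod_cast hz
    _ = W / ((D j : ℝ) - (k : ℝ)) + ∑ i ∈ Finset.univ.erase j, W / (D i : ℝ) := by
        rw [← Finset.add_sum_erase _ _ (Finset.mem_univ j)]
        have : W / (D j : ℝ) + (k : ℝ) * (W / ((D j : ℝ) * ((D j : ℝ) - k)))
            = W / ((D j : ℝ) - (k : ℝ)) := by
          field_simp; ring
        linarith [this]
end

section
/- Let V be a finite set with |V| = n ≥ 2 and let u ≠ v be elements of V. Let P be a path graph on V whose two endpoints are u and v (i.e., a Hamiltonian path on V from u to v), and let G be any connected simple graph on V. Then there exists β₀ > 0 such that for all real β with 0 < β < β₀, the series Σ_{l≥1} β^l (A_G^l)_{uv} and Σ_{l≥1} β^l (A_P^l)_{uv} both converge and Σ_{l≥1} β^l (A_G^l)_{uv} ≥ Σ_{l≥1} β^l (A_P^l)_{uv}, where A_G and A_P denote the adjacency matrices of G and P respectively. -/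
/-!
Indexing the vertices by their position along the Hamiltonian path, adjacent vertices of `P` have
positions differing by one, so every `u`-`v` walk in `P` has length at least `n - 1` and the Katz
series of `P` starts at order `β ^ (n - 1)`. A connected `G` has a `u`-`v` path of length
`d = dist_G(u, v) ≤ n - 1`, so its series is at least `β ^ d`. If `d < n - 1`, the leading terms
decide for small `β`, all tails being dominated by the geometric series in `β n`. If `d = n - 1`,
a shortest `u`-`v` path of `G` is Hamiltonian, so `P` maps injectively and homomorphically into
`G` fixing `u` and `v`, and such a map can only increase walk counts, term by term.
-/

open Finset Function

theorem tsum_le_geometric_of_eq_zero {f : ℕ → ℝ} {r : ℝ} {k : ℕ} (hf : Summable f) (hr₀ : 0 ≤ r)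
    (hr₁ : r < 1) (hzero : ∀ l < k, f l = 0) (hle : ∀ l, f l ≤ r ^ (l + 1)) :
    ∑' l, f l ≤ r ^ (k + 1) / (1 - r) := by
  rw [← hf.sum_add_tsum_nat_add k, sum_eq_zero fun l hl => hzero l (mem_range.1 hl), zero_add]
  calc ∑' l, f (l + k) ≤ ∑' l, r ^ (k + 1) * r ^ l :=
        ((summable_nat_add_iff k).2 hf).tsum_le_tsum (fun l => (hle _).trans_eq (by ring))
          ((summable_geometric_of_lt_one hr₀ hr₁).mul_left _)
    _ = r ^ (k + 1) / (1 - r) := by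
      rw [tsum_mul_left, tsum_geometric_of_lt_one hr₀ hr₁, div_eq_mul_inv]

theorem mul_le_half_of_two_mul_pow_self_mul_le {n : ℕ} {β : ℝ} (hn : 0 < n) (hβ : 0 ≤ β)
    (h : 2 * (n : ℝ) ^ n * β ≤ 1) : β * n ≤ 1 / 2 := by
  have : (n : ℝ) ≤ (n : ℝ) ^ n := le_self_pow₀ (Nat.one_le_cast.2 hn) hn.ne'
  nlinarith

namespace SimpleGraph

variable {V W : Type*}

namespace Walk

variable {G : SimpleGraph V} {u v : V}

theorem le_add_length_of_adj_le_succ (f : V → ℕ) (hf : ∀ ⦃x y⦄, G.Adj x y → f y ≤ f x + 1) :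
    ∀ {a b : V} (w : G.Walk a b), f b ≤ f a + w.length
  | _, _, nil => le_rfl
  | _, _, cons h w => by
    have ih := le_add_length_of_adj_le_succ f hf w
    have hstep := hf h
    rw [length_cons]
    omega

variable [DecidableEq V] {p : G.Walk u v} {x y : V}

theorem getVert_idxOf_support (hx : x ∈ p.support) : p.getVert (p.support.idxOf x) = x := by
  have hlt := List.idxOf_lt_length_iff.2 hx
  rw [getVert_eq_support_getElem _ (by rw [length_support] at hlt; omega), List.getElem_idxOf]

theorem idxOf_support_le_length (hx : x ∈ p.support) : p.support.idxOf x ≤ p.length := by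
  have := List.idxOf_lt_length_iff.2 hx
  rw [length_support] at this
  omega

theorem IsPath.idxOf_support_getVert (hp : p.IsPath) {i : ℕ} (hi : i ≤ p.length) :
    p.support.idxOf (p.getVert i) = i := by
  rw [getVert_eq_support_getElem _ hi, hp.support_nodup.idxOf_getElem]

theorem idxOf_support_start : p.support.idxOf u = 0 := by
  rw [← cons_tail_support, List.idxOf_cons_self]

theorem IsPath.idxOf_support_end (hp : p.IsPath) : p.support.idxOf v = p.length := by
  simpa only [getVert_length] using hp.idxOf_support_getVert le_rfl

theorem IsPath.idxOf_support_succ_of_mem_edges (hp : p.IsPath) (h : s(x, y) ∈ p.edges) :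
    p.support.idxOf y = p.support.idxOf x + 1 ∨ p.support.idxOf x = p.support.idxOf y + 1 := by
  obtain ⟨i, hi, hxy⟩ := List.getElem_of_mem h
  rw [getElem_edges, Sym2.eq_iff] at hxy
  rw [length_edges] at hi
  rcases hxy with ⟨rfl, rfl⟩ | ⟨rfl, rfl⟩
  · left
    rw [hp.idxOf_support_getVert hi.le, hp.idxOf_support_getVert hi]
  · right
    rw [hp.idxOf_support_getVert hi.le, hp.idxOf_support_getVert hi]

end Walk

section Path

variable [DecidableEq V] {P : SimpleGraph V} {u v : V} {p : P.Walk u v}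

theorem Walk.IsPath.dist_eq_length (hp : p.IsPath)
    (hP : ∀ ⦃x y⦄, P.Adj x y → s(x, y) ∈ p.edges) : P.dist u v = p.length := by
  refine le_antisymm (dist_le p) ?_
  obtain ⟨w, hw⟩ := Reachable.exists_walk_length_eq_dist ⟨p⟩
  have hw' := w.le_add_length_of_adj_le_succ (fun x => p.support.idxOf x) fun x y hxy => by
    rcases hp.idxOf_support_succ_of_mem_edges (hP hxy) with h | h <;> omega
  rw [Walk.idxOf_support_start, hp.idxOf_support_end] at hw'
  omega

theorem Walk.IsHamiltonian.exists_injective_hom (hp : p.IsHamiltonian)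
    (hP : ∀ ⦃x y⦄, P.Adj x y → s(x, y) ∈ p.edges) {G : SimpleGraph W} {a b : W} {q : G.Walk a b}
    (hq : q.IsPath) (hlen : q.length = p.length) :
    ∃ f : P →g G, Injective f ∧ f u = a ∧ f v = b := by
  have hidx (x : V) := Walk.idxOf_support_le_length (p := p) (hp.mem_support x)
  refine ⟨⟨fun x => q.getVert (p.support.idxOf x), fun {x y} hxy => ?_⟩, fun x y hxy => ?_, ?_, ?_⟩
  · rcases hp.isPath.idxOf_support_succ_of_mem_edges (hP hxy) with h | h
    · rw [h]
      exact q.adj_getVert_succ (by have := hidx y; omega)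
    · rw [h]
      exact (q.adj_getVert_succ (by have := hidx x; omega)).symm
  · have hxy' := hq.getVert_injOn (by simpa [hlen] using hidx x) (by simpa [hlen] using hidx y) hxy
    rw [← Walk.getVert_idxOf_support (hp.mem_support x),
      ← Walk.getVert_idxOf_support (hp.mem_support y)]
    exact congrArg p.getVert hxy'
  · simp [Walk.idxOf_support_start]
  · simp [hp.isPath.idxOf_support_end, ← hlen]

end Path

theorem dist_lt_card [Fintype V] (G : SimpleGraph V) (x y : V) : G.dist x y < Fintype.card V := by
  by_cases h : G.Reachable x y
  · obtain ⟨w, hw, hlen⟩ := h.exists_path_of_dist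
    exact hlen ▸ hw.length_lt
  · rw [dist_eq_zero_of_not_reachable h]
    exact Fintype.card_pos_iff.2 ⟨x⟩

section Katz

variable [Fintype V] [DecidableEq V] (G : SimpleGraph V) [DecidableRel G.Adj]

theorem adjMatrix_pow_apply_nonneg (l : ℕ) (x y : V) : 0 ≤ (G.adjMatrix ℝ ^ l) x y := by
  rw [adjMatrix_pow_apply_eq_card_walk]
  positivity

theorem adjMatrix_pow_apply_le_card_pow (l : ℕ) (x y : V) :
    (G.adjMatrix ℝ ^ l) x y ≤ (Fintype.card V : ℝ) ^ l := by
  induction l generalizing y with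
  | zero => by_cases h : x = y <;> simp [h]
  | succ l ih =>
    rw [pow_succ, Matrix.mul_apply]
    calc ∑ k, (G.adjMatrix ℝ ^ l) x k * G.adjMatrix ℝ k y ≤ ∑ _k : V, (Fintype.card V : ℝ) ^ l :=
          sum_le_sum fun k _ => (mul_le_of_le_one_right (G.adjMatrix_pow_apply_nonneg l x k)
            (by rw [adjMatrix_apply]; split_ifs <;> norm_num)).trans (ih k)
      _ = (Fintype.card V : ℝ) ^ (l + 1) := by simp [pow_succ, mul_comm]

theorem adjMatrix_pow_apply_eq_zero_of_lt_dist {l : ℕ} {x y : V} (hl : l < G.dist x y) :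
    (G.adjMatrix ℝ ^ l) x y = 0 := by
  rw [adjMatrix_pow_apply_eq_card_walk, Nat.cast_eq_zero, Fintype.card_eq_zero_iff]
  exact ⟨fun ⟨w, hw⟩ => (G.dist_le w).not_gt (hw ▸ hl)⟩

theorem one_le_adjMatrix_pow_dist_apply {x y : V} (h : G.Reachable x y) :
    1 ≤ (G.adjMatrix ℝ ^ G.dist x y) x y := by
  obtain ⟨w, hw⟩ := h.exists_walk_length_eq_dist
  have : Nonempty {w : G.Walk x y | w.length = G.dist x y} := ⟨⟨w, hw⟩⟩
  rw [adjMatrix_pow_apply_eq_card_walk, Nat.one_le_cast]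
  exact Fintype.card_pos

theorem adjMatrix_pow_apply_le_of_injective [Fintype W] [DecidableEq W] {H : SimpleGraph W}
    [DecidableRel H.Adj] (f : G →g H) (hf : Injective f) (l : ℕ) (x y : V) :
    (G.adjMatrix ℝ ^ l) x y ≤ (H.adjMatrix ℝ ^ l) (f x) (f y) := by
  simp only [adjMatrix_pow_apply_eq_card_walk]
  exact_mod_cast Fintype.card_le_of_injective
    (fun w => ⟨w.1.map f, (w.1.length_map f).trans w.2⟩ :
      {w : G.Walk x y | w.length = l} → {w : H.Walk (f x) (f y) | w.length = l})
    fun w w' h => Subtype.ext (Walk.map_injective_of_injective hf x y (congrArg Subtype.val h))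

noncomputable def katzTerm (β : ℝ) (u v : V) (l : ℕ) : ℝ :=
  β ^ (l + 1) * (G.adjMatrix ℝ ^ (l + 1)) u v

variable {G} {β : ℝ} {u v : V}

theorem katzTerm_nonneg (hβ : 0 ≤ β) (l : ℕ) : 0 ≤ G.katzTerm β u v l :=
  mul_nonneg (pow_nonneg hβ _) (G.adjMatrix_pow_apply_nonneg _ u v)

theorem katzTerm_le (hβ : 0 ≤ β) (l : ℕ) :
    G.katzTerm β u v l ≤ (β * Fintype.card V) ^ (l + 1) := by
  rw [katzTerm, mul_pow]
  exact mul_le_mul_of_nonneg_left (G.adjMatrix_pow_apply_le_card_pow _ u v) (pow_nonneg hβ _)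

theorem summable_katzTerm (hβ : 0 ≤ β) (hr : β * Fintype.card V < 1) :
    Summable (G.katzTerm β u v) :=
  .of_nonneg_of_le (katzTerm_nonneg hβ) (katzTerm_le hβ)
    ((summable_nat_add_iff 1).2 (summable_geometric_of_lt_one (by positivity) hr))

theorem tsum_katzTerm_le {k : ℕ} (hk : k < G.dist u v) (hβ : 0 ≤ β)
    (hr : β * Fintype.card V < 1) :
    ∑' l, G.katzTerm β u v l ≤ (β * Fintype.card V) ^ (k + 1) / (1 - β * Fintype.card V) :=
  tsum_le_geometric_of_eq_zero (summable_katzTerm hβ hr) (by positivity) hr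
    (fun l hl => by rw [katzTerm, G.adjMatrix_pow_apply_eq_zero_of_lt_dist (by omega), mul_zero])
    (katzTerm_le hβ)

theorem tsum_katzTerm_le_of_injective [Fintype W] [DecidableEq W] {H : SimpleGraph W}
    [DecidableRel H.Adj] (f : G →g H) (hf : Injective f) {a b : W} (ha : f u = a) (hb : f v = b)
    (hβ : 0 ≤ β) (hs : Summable (G.katzTerm β u v)) (hs' : Summable (H.katzTerm β a b)) :
    ∑' l, G.katzTerm β u v l ≤ ∑' l, H.katzTerm β a b l := by
  subst ha hb
  exact hs.tsum_le_tsum (fun l => mul_le_mul_of_nonneg_left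
    (G.adjMatrix_pow_apply_le_of_injective f hf _ u v) (pow_nonneg hβ _)) hs'

theorem pow_dist_le_tsum_katzTerm (huv : u ≠ v) (h : G.Reachable u v) (hβ : 0 ≤ β)
    (hs : Summable (G.katzTerm β u v)) : β ^ G.dist u v ≤ ∑' l, G.katzTerm β u v l := by
  have hd : G.dist u v - 1 + 1 = G.dist u v := Nat.sub_add_cancel (h.pos_dist_of_ne huv)
  calc β ^ G.dist u v ≤ G.katzTerm β u v (G.dist u v - 1) := by
        rw [katzTerm, hd]
        exact le_mul_of_one_le_right (pow_nonneg hβ _) (G.one_le_adjMatrix_pow_dist_apply h)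
    _ ≤ ∑' l, G.katzTerm β u v l := hs.le_tsum _ fun l _ => katzTerm_nonneg hβ l

theorem tsum_katzTerm_le_of_dist_lt {H : SimpleGraph V} [DecidableRel H.Adj] (huv : u ≠ v)
    (hG : G.Reachable u v) (hlt : G.dist u v < H.dist u v) (hβ : 0 < β)
    (hβ₀ : 2 * (Fintype.card V : ℝ) ^ Fintype.card V * β ≤ 1) :
    ∑' l, H.katzTerm β u v l ≤ ∑' l, G.katzTerm β u v l := by
  set d := G.dist u v
  set N : ℝ := (Fintype.card V : ℝ)
  have hcard : 0 < Fintype.card V := Fintype.card_pos_iff.2 ⟨u⟩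
  have hN : 1 ≤ N := Nat.one_le_cast.2 hcard
  have hpow : N ^ (d + 1) ≤ N ^ Fintype.card V := pow_le_pow_right₀ hN (G.dist_lt_card u v)
  have hr : β * N ≤ 1 / 2 := mul_le_half_of_two_mul_pow_self_mul_le hcard hβ.le hβ₀
  calc ∑' l, H.katzTerm β u v l ≤ (β * N) ^ (d + 1) / (1 - β * N) :=
        tsum_katzTerm_le hlt hβ.le (by linarith)
    _ ≤ 2 * (β * N) ^ (d + 1) := by
        rw [div_le_iff₀ (by linarith)]
        nlinarith [pow_nonneg (mul_nonneg hβ.le (zero_le_one.trans hN)) (d + 1)]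
    _ = (2 * N ^ (d + 1) * β) * β ^ d := by ring
    _ ≤ β ^ d := mul_le_of_le_one_left (pow_nonneg hβ.le _) (by nlinarith)
    _ ≤ ∑' l, G.katzTerm β u v l :=
        pow_dist_le_tsum_katzTerm huv hG hβ.le (summable_katzTerm hβ.le (by linarith))

end Katz

end SimpleGraph

open SimpleGraph

theorem stmt_15_general {V : Type*} [Fintype V] [DecidableEq V]
    (u v : V) (huv : u ≠ v)
    (P : SimpleGraph V) [DecidableRel P.Adj]
    (p : P.Walk u v) (hp : p.IsHamiltonian)
    (hPedges : ∀ e : Sym2 V, e ∈ P.edgeSet ↔ e ∈ p.edges)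
    (G : SimpleGraph V) [DecidableRel G.Adj] (hG : G.Connected) :
    ∃ β₀ : ℝ, 0 < β₀ ∧ ∀ β : ℝ, 0 < β → β < β₀ →
      (Summable fun l : ℕ => β ^ (l + 1) * ((G.adjMatrix ℝ) ^ (l + 1)) u v) ∧
      (Summable fun l : ℕ => β ^ (l + 1) * ((P.adjMatrix ℝ) ^ (l + 1)) u v) ∧
      ∑' l : ℕ, β ^ (l + 1) * ((P.adjMatrix ℝ) ^ (l + 1)) u v ≤
        ∑' l : ℕ, β ^ (l + 1) * ((G.adjMatrix ℝ) ^ (l + 1)) u v := by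
  have hP : ∀ ⦃x y⦄, P.Adj x y → s(x, y) ∈ p.edges := fun x y h => (hPedges _).1 h
  have hdistP : P.dist u v = p.length := hp.isPath.dist_eq_length hP
  have hdistG : G.dist u v ≤ p.length := by
    have := G.dist_lt_card u v
    rw [hp.length_eq]
    omega
  have hcard : 0 < Fintype.card V := Fintype.card_pos_iff.2 ⟨u⟩
  set N : ℝ := (Fintype.card V : ℝ)
  have hN : 0 < N := Nat.cast_pos.2 hcard
  refine ⟨1 / (2 * N ^ Fintype.card V), by positivity, fun β hβ hβ₀ => ?_⟩
  rw [lt_div_iff₀ (by positivity), mul_comm] at hβ₀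
  have hr : β * N < 1 := by
    linarith [mul_le_half_of_two_mul_pow_self_mul_le hcard hβ.le hβ₀.le]
  have hsG : Summable (G.katzTerm β u v) := summable_katzTerm hβ.le hr
  have hsP : Summable (P.katzTerm β u v) := summable_katzTerm hβ.le hr
  refine ⟨hsG, hsP, ?_⟩
  rcases hdistG.lt_or_eq with hlt | heq
  · exact tsum_katzTerm_le_of_dist_lt huv (hG.preconnected u v) (hdistP ▸ hlt) hβ hβ₀.le
  · obtain ⟨q, hq, hlen⟩ := hG.exists_path_of_dist u v
    obtain ⟨f, hf, hfu, hfv⟩ := hp.exists_injective_hom hP hq (hlen.trans heq)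
    exact tsum_katzTerm_le_of_injective f hf hfu hfv hβ.le hsP hsG

/-- Among connected graphs on a fixed vertex set, the Katz similarity
between `u` and `v` is minimized (for all sufficiently small `β > 0`) by a Hamiltonian
path (a "string") with `u` and `v` as its two endpoints. Here `P` is such a path graph
(its edges are exactly those of a Hamiltonian path `p` from `u` to `v`) and `G` is an
arbitrary connected graph on the same vertex set. -/
theorem stmt_15 {V : Type*} [Fintype V] [DecidableEq V]
    (n : ℕ) (hn : 2 ≤ n) (hcard : Fintype.card V = n)
    (u v : V) (huv : u ≠ v)
    (P : SimpleGraph V) [DecidableRel P.Adj]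
    (p : P.Walk u v) (hp : p.IsHamiltonian)
    (hPedges : ∀ e : Sym2 V, e ∈ P.edgeSet ↔ e ∈ p.edges)
    (G : SimpleGraph V) [DecidableRel G.Adj] (hG : G.Connected) :
    ∃ β₀ : ℝ, 0 < β₀ ∧ ∀ β : ℝ, 0 < β → β < β₀ →
      (Summable fun l : ℕ => β ^ (l + 1) * ((G.adjMatrix ℝ) ^ (l + 1)) u v) ∧
      (Summable fun l : ℕ => β ^ (l + 1) * ((P.adjMatrix ℝ) ^ (l + 1)) u v) ∧
      ∑' l : ℕ, β ^ (l + 1) * ((P.adjMatrix ℝ) ^ (l + 1)) u v ≤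
        ∑' l : ℕ, β ^ (l + 1) * ((G.adjMatrix ℝ) ^ (l + 1)) u v :=
  stmt_15_general u v huv P p hp hPedges G hG
end
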